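/- arXiv:1708.05445 — 2 statements merged into one kernel-verified Lean document; each statement's English description precedes it below -/
import Mathlib

section
/- Let β > 1/2 and let r ∈ ℕ with r ≥ β. Let K ∈ L¹(ℝ) satisfy ∫ K(x) dx = 1, ∫ x^j K(x) dx = 0 for j = 1, …, r−1 (this condition being vacuous when r = 1), ∫ x^r K(x) dx ≠ 0, and ∫ |x|^r |K(x)| dx < +∞. Then K̂(0) = 1 and I²_β[K̂] := ∫_{t≠0} |1 − K̂(t)|²/|t|^{2β} dt < +∞. -/
/-!
Writing `R_r(y) = e^{iy} - ∑_{j<r} (iy)^j/j!`, we have `R_{r+1}(0) = 0` and `R_{r+1}' = i R_r`,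
so the mean value inequality gives `|R_r(y)| ≤ |y|^r` by induction. Integrating `R_r(tx)` against
`K`, the moment conditions turn this into `|1 - K̂(t)| ≤ |t|^r ∫ |x|^r |K x| dx`. Hence the
integrand of `I²_β` is `O(|t|^{2r-2β})` near `0`, integrable because `2r - 2β > -1`, while
`|1 - K̂| ≤ 1 + ‖K‖₁` makes it `O(|t|^{-2β})` at infinity, integrable because `2β > 1`.
-/

open MeasureTheory Filter Real Topology

/-- Fourier transform `f̂(t) = ∫ e^{itx} f(x) dx`. -/
noncomputable def ftr (f : ℝ → ℝ) (t : ℝ) : ℂ :=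
  ∫ x : ℝ, Complex.exp (Complex.I * t * x) * (f x : ℂ)

noncomputable def expIRemainder (n : ℕ) (y : ℝ) : ℂ :=
  Complex.exp (Complex.I * y) - ∑ j ∈ Finset.range n, (Complex.I * y) ^ j / j.factorial

lemma expIRemainder_succ_zero (n : ℕ) : expIRemainder (n + 1) 0 = 0 := by
  simp [expIRemainder, Finset.sum_range_succ']

lemma hasDerivAt_expIRemainder_succ (n : ℕ) (y : ℝ) :
    HasDerivAt (expIRemainder (n + 1)) (Complex.I * expIRemainder n y) y := by
  have hIs : HasDerivAt (fun z : ℂ => Complex.I * z) Complex.I (y : ℂ) := by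
    simpa using (hasDerivAt_id (y : ℂ)).const_mul Complex.I
  have hsum := HasDerivAt.fun_sum (u := Finset.range (n + 1)) fun j _ =>
    ((hIs.pow j).div_const (j.factorial : ℂ)).comp_ofReal
  refine (hIs.cexp.comp_ofReal.sub hsum).congr_deriv ?_
  rw [expIRemainder, Finset.sum_range_succ', mul_sub, Finset.mul_sum]
  congr 1
  · ring
  · simp only [Nat.cast_zero, zero_mul, zero_div, add_zero, Nat.factorial_succ, Nat.cast_mul,
      Nat.add_sub_cancel]
    refine Finset.sum_congr rfl fun j _ => ?_
    field_simp

lemma norm_expIRemainder_le (n : ℕ) (y : ℝ) : ‖expIRemainder n y‖ ≤ |y| ^ n := by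
  induction n generalizing y with
  | zero => simp [expIRemainder, Complex.norm_exp_I_mul_ofReal]
  | succ n ih =>
    have hderiv_le : ∀ x ∈ Set.uIcc 0 y, ‖Complex.I * expIRemainder n x‖ ≤ |y| ^ n := by
      intro x hx
      rw [norm_mul, Complex.norm_I, one_mul]
      have hxy : |x| ≤ |y| := by simpa using Set.abs_sub_left_of_mem_uIcc hx
      exact (ih x).trans (pow_le_pow_left₀ (abs_nonneg x) hxy n)
    have := (convex_uIcc 0 y).norm_image_sub_le_of_norm_hasDerivWithin_le
      (fun x _ => (hasDerivAt_expIRemainder_succ n x).hasDerivWithinAt) hderiv_le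
      Set.left_mem_uIcc Set.right_mem_uIcc
    rwa [expIRemainder_succ_zero, sub_zero, sub_zero, norm_eq_abs, ← pow_succ] at this

lemma integrable_pow_mul_of_integrable_abs_pow_mul {μ : Measure ℝ} {K : ℝ → ℝ} {j r : ℕ}
    (hjr : j ≤ r) (hK : Integrable K μ) (hKr : Integrable (fun x => |x| ^ r * |K x|) μ) :
    Integrable (fun x => x ^ j * K x) μ := by
  refine (hK.abs.add hKr).mono' ((continuous_pow j).aestronglyMeasurable.mul
    hK.aestronglyMeasurable) (Eventually.of_forall fun x => ?_)
  rw [Pi.add_apply, norm_eq_abs, abs_mul, abs_pow]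
  have hKx := abs_nonneg (K x)
  rcases le_total |x| 1 with hx | hx
  · nlinarith [pow_le_one₀ (abs_nonneg x) hx (n := j), pow_nonneg (abs_nonneg x) r]
  · nlinarith [pow_le_pow_right₀ hx hjr]

lemma norm_cexp_I_mul_mul_ofReal (t x : ℝ) (c : ℝ) :
    ‖Complex.exp (Complex.I * t * x) * (c : ℂ)‖ = |c| := by
  rw [norm_mul, mul_assoc, ← Complex.ofReal_mul, Complex.norm_exp_I_mul_ofReal, one_mul,
    Complex.norm_real, norm_eq_abs]

lemma integrable_cexp_I_mul_mul_ofReal {K : ℝ → ℝ} (hK : Integrable K) (t : ℝ) :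
    Integrable (fun x : ℝ => Complex.exp (Complex.I * t * x) * (K x : ℂ)) :=
  hK.abs.mono' (by fun_prop) (Eventually.of_forall fun x => (norm_cexp_I_mul_mul_ofReal t x _).le)

lemma ftr_zero (K : ℝ → ℝ) : ftr K 0 = ((∫ x, K x : ℝ) : ℂ) := by
  simpa [ftr] using integral_complex_ofReal

lemma continuous_ftr {K : ℝ → ℝ} (hK : Integrable K) : Continuous (ftr K) :=
  continuous_of_dominated (fun _ => by fun_prop) (fun t => Eventually.of_forall fun x =>
    (norm_cexp_I_mul_mul_ofReal t x _).le) hK.abs (Eventually.of_forall fun _ => by fun_prop)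

lemma norm_ftr_le (K : ℝ → ℝ) (t : ℝ) : ‖ftr K t‖ ≤ ∫ x, |K x| :=
  (norm_integral_le_integral_norm _).trans_eq
    (integral_congr_ae (Eventually.of_forall fun x => norm_cexp_I_mul_mul_ofReal t x _))

lemma ftr_sub_taylor_eq_integral_expIRemainder {K : ℝ → ℝ} {r : ℕ} (hK : Integrable K)
    (hKr : Integrable (fun x => |x| ^ r * |K x|)) (t : ℝ) :
    ftr K t - ∑ j ∈ Finset.range r,
        (Complex.I * t) ^ j / j.factorial * ((∫ x, x ^ j * K x : ℝ) : ℂ) =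
      ∫ x, expIRemainder r (t * x) * (K x : ℂ) := by
  have hterm : ∀ j ∈ Finset.range r, Integrable fun x : ℝ =>
      (Complex.I * t) ^ j / j.factorial * ((x ^ j * K x : ℝ) : ℂ) := fun j hj =>
    ((integrable_pow_mul_of_integrable_abs_pow_mul (Finset.mem_range.1 hj).le hK
      hKr).ofReal.const_mul _)
  have hmoment : ∀ j ∈ Finset.range r,
      (Complex.I * t) ^ j / j.factorial * ((∫ x, x ^ j * K x : ℝ) : ℂ) =
        ∫ x : ℝ, (Complex.I * t) ^ j / j.factorial * ((x ^ j * K x : ℝ) : ℂ) := fun j _ => by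
    rw [integral_const_mul, integral_complex_ofReal]
  rw [Finset.sum_congr rfl hmoment, ← integral_finsetSum _ hterm, ftr,
    ← integral_sub (integrable_cexp_I_mul_mul_ofReal hK t) (integrable_finsetSum _ hterm)]
  refine integral_congr_ae (Eventually.of_forall fun x => ?_)
  simp only [expIRemainder, sub_mul, Finset.sum_mul]
  push_cast
  congr 1
  · rw [mul_assoc]
  · exact Finset.sum_congr rfl fun j _ => by ring

lemma norm_ftr_sub_taylor_le {K : ℝ → ℝ} {r : ℕ} (hK : Integrable K)
    (hKr : Integrable (fun x => |x| ^ r * |K x|)) (t : ℝ) :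
    ‖ftr K t - ∑ j ∈ Finset.range r,
        (Complex.I * t) ^ j / j.factorial * ((∫ x, x ^ j * K x : ℝ) : ℂ)‖ ≤
      |t| ^ r * ∫ x, |x| ^ r * |K x| := by
  rw [ftr_sub_taylor_eq_integral_expIRemainder hK hKr, ← integral_const_mul]
  refine norm_integral_le_of_norm_le (hKr.const_mul _) (Eventually.of_forall fun x => ?_)
  calc ‖expIRemainder r (t * x) * (K x : ℂ)‖ ≤ |t * x| ^ r * |K x| := by
        rw [norm_mul, Complex.norm_real, norm_eq_abs]
        gcongr
        exact norm_expIRemainder_le r (t * x)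
    _ = |t| ^ r * (|x| ^ r * |K x|) := by rw [abs_mul, mul_pow, mul_assoc]

lemma integrable_of_norm_le_abs_rpow {F : Type*} [NormedAddCommGroup F] {f : ℝ → F}
    {A B a b : ℝ} (hf : AEStronglyMeasurable f) (ha : -1 < a) (hb : b < -1)
    (h_near : ∀ t ≠ 0, |t| ≤ 1 → ‖f t‖ ≤ A * |t| ^ a)
    (h_far : ∀ t, 1 ≤ |t| → ‖f t‖ ≤ B * |t| ^ b) :
    Integrable f := by
  set g : ℝ → ℝ := fun y => if y ≤ 1 then A * y ^ a else B * y ^ b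
  have hg_near : IntegrableOn g (Set.Ioc 0 1) := by
    refine IntegrableOn.congr_fun ?_ (fun y hy => (if_pos hy.2).symm) measurableSet_Ioc
    exact ((intervalIntegral.intervalIntegrable_rpow' ha).const_mul A).1
  have hg_far : IntegrableOn g (Set.Ioi 1) := by
    refine IntegrableOn.congr_fun ?_ (fun y hy => (if_neg (not_le.2 hy)).symm) measurableSet_Ioi
    exact (integrableOn_Ioi_rpow_of_lt hb one_pos).const_mul B
  have hg : Integrable fun t : ℝ => g ‖t‖ := by
    rw [integrable_fun_norm_addHaar volume, ← Set.Ioc_union_Ioi_eq_Ioi zero_le_one]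
    simpa using hg_near.union hg_far
  refine hg.mono' hf ((volume.ae_ne 0).mono fun t ht0 => ?_)
  rcases le_or_gt |t| 1 with ht | ht
  · simpa [g, ht] using h_near t ht0 ht
  · simpa [g, ht.not_ge] using h_far t ht.le

lemma norm_one_sub_ftr_le (K : ℝ → ℝ) (t : ℝ) : ‖1 - ftr K t‖ ≤ 1 + ∫ x, |K x| :=
  (norm_sub_le _ _).trans (by rw [norm_one]; gcongr; exact norm_ftr_le K t)

lemma norm_one_sub_ftr_le_of_moments {K : ℝ → ℝ} {r : ℕ} (hr : 0 < r) (hK : Integrable K)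
    (hK_one : ∫ x, K x = 1) (hK_mom : ∀ j : ℕ, 1 ≤ j → j < r → ∫ x, x ^ j * K x = 0)
    (hKr : Integrable (fun x => |x| ^ r * |K x|)) (t : ℝ) :
    ‖1 - ftr K t‖ ≤ |t| ^ r * ∫ x, |x| ^ r * |K x| := by
  have h_taylor_poly : ∑ j ∈ Finset.range r,
      (Complex.I * t) ^ j / j.factorial * ((∫ x, x ^ j * K x : ℝ) : ℂ) = 1 := by
    rw [Finset.sum_eq_single_of_mem 0 (Finset.mem_range.2 hr) fun j hj hj0 => by
      rw [hK_mom j (Nat.one_le_iff_ne_zero.2 hj0) (Finset.mem_range.1 hj)]; simp]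
    simp [hK_one]
  simpa [h_taylor_poly, norm_sub_rev] using norm_ftr_sub_taylor_le hK hKr t

lemma sq_div_abs_rpow_le_of_le_abs_pow_mul {u M t s : ℝ} {r : ℕ} (ht : t ≠ 0) (hu : 0 ≤ u)
    (h : u ≤ |t| ^ r * M) : u ^ 2 / |t| ^ s ≤ M ^ 2 * |t| ^ (2 * r - s) := by
  rw [rpow_sub (abs_pos.2 ht), ← mul_div_assoc]
  gcongr
  calc u ^ 2 ≤ (|t| ^ r * M) ^ 2 := by gcongr
    _ = M ^ 2 * |t| ^ (2 * r : ℝ) := by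
      rw [show (2 * r : ℝ) = ((2 * r : ℕ) : ℝ) by push_cast; ring, rpow_natCast]
      ring

lemma sq_div_abs_rpow_le_of_le {u C t s : ℝ} (hu : 0 ≤ u) (h : u ≤ C) :
    u ^ 2 / |t| ^ s ≤ C ^ 2 * |t| ^ (-s) := by
  rw [rpow_neg (abs_nonneg t), ← div_eq_mul_inv]
  gcongr

theorem kernel_of_order_r_satisfies_integrability_general
    (β : ℝ) (r : ℕ) (hβ : 1 / 2 < β) (hrβ : β ≤ (r : ℝ))
    (K : ℝ → ℝ) (hK_int : Integrable K)
    (hK_one : ∫ x, K x = 1)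
    (hK_mom : ∀ j : ℕ, 1 ≤ j → j < r → ∫ x, x ^ j * K x = 0)
    (hK_abs : Integrable (fun x => |x| ^ r * |K x|)) :
    ftr K 0 = 1 ∧
    IntegrableOn
      (fun t : ℝ => (‖1 - ftr K t‖) ^ 2 / |t| ^ (2 * β)) {0}ᶜ := by
  have hr : 0 < r := by exact_mod_cast (by linarith : (0 : ℝ) < r)
  refine ⟨by simp [ftr_zero, hK_one], ?_⟩
  have h_meas : Measurable fun t : ℝ => (‖1 - ftr K t‖) ^ 2 / |t| ^ (2 * β) := by
    have := continuous_ftr hK_int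
    fun_prop
  refine (integrable_of_norm_le_abs_rpow h_meas.aestronglyMeasurable
    (by linarith : -1 < 2 * r - 2 * β) (by linarith : -(2 * β) < -1)
    (fun t ht0 _ => by
      rw [norm_of_nonneg (by positivity)]
      exact sq_div_abs_rpow_le_of_le_abs_pow_mul ht0 (norm_nonneg _)
        (norm_one_sub_ftr_le_of_moments hr hK_int hK_one hK_mom hK_abs t))
    (fun t _ => by
      rw [norm_of_nonneg (by positivity)]
      exact sq_div_abs_rpow_le_of_le (norm_nonneg _) (norm_one_sub_ftr_le K t))).integrableOn

theorem kernel_of_order_r_satisfies_integrability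
    (β : ℝ) (r : ℕ) (hβ : 1 / 2 < β) (hrβ : β ≤ (r : ℝ))
    (K : ℝ → ℝ) (hK_int : Integrable K)
    (hK_one : ∫ x, K x = 1)
    (hK_mom : ∀ j : ℕ, 1 ≤ j → j < r → ∫ x, x ^ j * K x = 0)
    (hK_r : ∫ x, x ^ r * K x ≠ 0)
    (hK_abs : Integrable (fun x => |x| ^ r * |K x|)) :
    ftr K 0 = 1 ∧
    IntegrableOn
      (fun t : ℝ => (‖1 - ftr K t‖) ^ 2 / |t| ^ (2 * β)) {0}ᶜ :=
  kernel_of_order_r_satisfies_integrability_general β r hβ hrβ K hK_int hK_one hK_mom hK_abs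
end

section
/- Let G and G′ be probability measures on a Borel subset 𝒴 ⊆ ℝ whose moment generating functions M_G(s) and M_{G′}(s) are finite for all |s| < s₀, with 0 < s₀ < 1. Fix a real number p ≥ 1 and 0 < u < s₀. Then there exists a constant C < +∞, depending only on p, u, s₀ and on the values of the moment generating functions of G and G′ on (−s₀,s₀), such that for every M > 0 and every 0 < h ≤ 1, ∫_{|x|>M} |x|^p [((G+G′)∗φ_h)(x)] dx ≤ C e^{−uM}, where ((G+G′)∗φ_h)(x) := ∫ φ_h(x−y) dG(y) + ∫ φ_h(x−y) dG′(y). -/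
open MeasureTheory Filter Real Topology

/-- Density of the centered Gaussian measure with variance `h²`. -/
noncomputable def gaussDens (h x : ℝ) : ℝ :=
  (h * Real.sqrt (2 * π))⁻¹ * Real.exp (-x ^ 2 / (2 * h ^ 2))

/-!
Pick `s` with `u < s < s₀`. On `{|x| > M}` we have `|x| ^ p ≤ K e^{-uM} e^{s|x|}` with
`K = (p / (s - u)) ^ p`, so it suffices to bound the exponential moment
`∫ e^{s|x|} ((G + G') ∗ φ_h)(x) dx` uniformly in `h ≤ 1`. The weight `e^{s|·|}` is
submultiplicative, so by Tonelli this moment is at most `∫ e^{s|y|} d(G + G')(y)`, bounded by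
`M_G(±s)` and `M_{G'}(±s)`, times the Gaussian moment `∫ e^{s|t|} φ_h(t) dt ≤ 2 e^{h²s²/2}`.
-/

open ProbabilityTheory
open scoped ENNReal

theorem rpow_le_mul_exp {p ε t : ℝ} (hp : 0 < p) (hε : 0 < ε) (ht : 0 ≤ t) :
    t ^ p ≤ (p / ε) ^ p * exp (ε * t) := by
  have hlin : t ≤ p / ε * exp (ε * t / p) := by
    have := add_one_le_exp (ε * t / p)
    rw [div_mul_eq_mul_div, le_div_iff₀ hε]
    nlinarith [mul_div_cancel₀ (ε * t) hp.ne']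
  calc t ^ p ≤ (p / ε * exp (ε * t / p)) ^ p := by gcongr
    _ = (p / ε) ^ p * exp (ε * t) := by
      rw [mul_rpow (by positivity) (exp_nonneg _), ← exp_mul, div_mul_cancel₀ _ hp.ne']

theorem rpow_le_mul_exp_neg_mul_mul_exp {p u s M t : ℝ} (hp : 0 < p) (hu : 0 ≤ u)
    (hus : u < s) (hMt : M ≤ t) (ht : 0 ≤ t) :
    t ^ p ≤ (p / (s - u)) ^ p * exp (-u * M) * exp (s * t) := by
  calc t ^ p ≤ (p / (s - u)) ^ p * exp ((s - u) * t) := rpow_le_mul_exp hp (by linarith) ht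
    _ ≤ (p / (s - u)) ^ p * exp (-u * M + s * t) := by gcongr; nlinarith
    _ = (p / (s - u)) ^ p * exp (-u * M) * exp (s * t) := by rw [exp_add, mul_assoc]

theorem ofReal_exp_mul_abs_add_le {s : ℝ} (hs : 0 ≤ s) (a b : ℝ) :
    ENNReal.ofReal (exp (s * |a + b|))
      ≤ ENNReal.ofReal (exp (s * |a|)) * ENNReal.ofReal (exp (s * |b|)) := by
  rw [← ENNReal.ofReal_mul (exp_nonneg _), ← exp_add, ← mul_add]
  gcongr
  exact abs_add_le a b

theorem lintegral_mul_lintegral_sub_le {E : Type*} [MeasurableSpace E] [AddGroup E]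
    [MeasurableAdd E] [MeasurableSub₂ E] (ν μ : Measure E) [SFinite ν] [SFinite μ]
    [ν.IsAddRightInvariant] {w f : E → ℝ≥0∞} (hw : Measurable w) (hf : Measurable f)
    (hmul : ∀ a b, w (a + b) ≤ w a * w b) :
    ∫⁻ x, w x * ∫⁻ y, f (x - y) ∂μ ∂ν ≤ (∫⁻ y, w y ∂μ) * ∫⁻ t, w t * f t ∂ν := by
  calc ∫⁻ x, w x * ∫⁻ y, f (x - y) ∂μ ∂ν = ∫⁻ x, ∫⁻ y, w x * f (x - y) ∂μ ∂ν := by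
        refine lintegral_congr fun x => (lintegral_const_mul _ ?_).symm
        fun_prop
    _ = ∫⁻ y, ∫⁻ x, w x * f (x - y) ∂ν ∂μ := lintegral_lintegral_swap
        ((hw.comp measurable_fst).mul (hf.comp measurable_sub)).aemeasurable
    _ ≤ ∫⁻ y, w y * ∫⁻ t, w t * f t ∂ν ∂μ := lintegral_mono fun y => by
        calc ∫⁻ x, w x * f (x - y) ∂ν ≤ ∫⁻ x, w y * (w (x - y) * f (x - y)) ∂ν :=
              lintegral_mono fun x => by
                rw [← mul_assoc, mul_comm (w y)]
                gcongr
                simpa only [sub_add_cancel] using hmul (x - y) y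
          _ = w y * ∫⁻ t, w t * f t ∂ν := by
              rw [lintegral_const_mul (w y) (f := fun x => w (x - y) * f (x - y)) (by fun_prop),
                lintegral_sub_right_eq_self (fun t => w t * f t) y]
    _ = (∫⁻ y, w y ∂μ) * ∫⁻ t, w t * f t ∂ν := lintegral_mul_const _ hw

theorem lintegral_exp_mul_abs_le_mgf {Ω : Type*} [MeasurableSpace Ω] (μ : Measure Ω)
    {X : Ω → ℝ} {s : ℝ} (hpos : Integrable (fun ω => exp (s * X ω)) μ)
    (hneg : Integrable (fun ω => exp (-s * X ω)) μ) :
    ∫⁻ ω, ENNReal.ofReal (exp (s * |X ω|)) ∂μ ≤ ENNReal.ofReal (mgf X μ s + mgf X μ (-s)) := by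
  rw [mgf, mgf, ← integral_add hpos hneg, ofReal_integral_eq_lintegral_ofReal
    (f := fun ω => exp (s * X ω) + exp (-s * X ω)) (hpos.add hneg)
    (ae_of_all _ fun _ => by positivity)]
  refine lintegral_mono fun ω => ENNReal.ofReal_le_ofReal ?_
  rcases abs_cases (X ω) with ⟨hX, -⟩ | ⟨hX, -⟩ <;> rw [hX]
  · linarith [exp_pos (-s * X ω)]
  · rw [mul_neg, ← neg_mul]; linarith [exp_pos (s * X ω)]

theorem enorm_mul_integral_add_integral_le {α : Type*} [MeasurableSpace α] (μ ν : Measure α)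
    (c : ℝ) (f : α → ℝ) :
    ‖c * (∫ y, f y ∂μ + ∫ y, f y ∂ν)‖ₑ ≤ ‖c‖ₑ * ∫⁻ y, ‖f y‖ₑ ∂(μ + ν) := by
  rw [enorm_mul, lintegral_add_measure]
  gcongr
  exact (enorm_add_le _ _).trans
    (add_le_add (enorm_integral_le_lintegral_enorm _) (enorm_integral_le_lintegral_enorm _))

theorem enorm_rpow_mul_integral_add_integral_le (μ ν : Measure ℝ) (f : ℝ → ℝ) {p u s M x : ℝ}
    (hp : 0 < p) (hu : 0 ≤ u) (hus : u < s) (hx : M ≤ |x|) :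
    ‖|x| ^ p * (∫ y, f (x - y) ∂μ + ∫ y, f (x - y) ∂ν)‖ₑ
      ≤ ENNReal.ofReal ((p / (s - u)) ^ p * exp (-u * M)) *
        (ENNReal.ofReal (exp (s * |x|)) * ∫⁻ y, ‖f (x - y)‖ₑ ∂(μ + ν)) := by
  have hK : 0 ≤ (p / (s - u)) ^ p := rpow_nonneg (div_nonneg hp.le (by linarith)) p
  grw [enorm_mul_integral_add_integral_le, Real.enorm_of_nonneg (by positivity),
    rpow_le_mul_exp_neg_mul_mul_exp hp hu hus hx (abs_nonneg x),
    ENNReal.ofReal_mul (by positivity), mul_assoc]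

theorem integral_le_of_lintegral_enorm_le {α : Type*} [MeasurableSpace α] {μ : Measure α}
    {f : α → ℝ} {c : ℝ} (hc : 0 ≤ c) (hf : ∫⁻ a, ‖f a‖ₑ ∂μ ≤ ENNReal.ofReal c) :
    ∫ a, f a ∂μ ≤ c :=
  calc ∫ a, f a ∂μ ≤ ‖∫ a, f a ∂μ‖ₑ.toReal := by
        rw [toReal_enorm, Real.norm_eq_abs]
        exact le_abs_self _
    _ ≤ (ENNReal.ofReal c).toReal :=
        ENNReal.toReal_mono ENNReal.ofReal_ne_top ((enorm_integral_le_lintegral_enorm f).trans hf)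
    _ = c := ENNReal.toReal_ofReal hc

theorem enorm_gaussDens {h : ℝ} (hh : 0 < h) (x : ℝ) :
    ‖gaussDens h x‖ₑ = gaussianPDF 0 (h ^ 2).toNNReal x := by
  have hpdf : gaussDens h x = gaussianPDFReal 0 (h ^ 2).toNNReal x := by
    simp only [gaussDens, gaussianPDFReal, Real.coe_toNNReal _ (sq_nonneg h), sub_zero]
    rw [mul_comm (2 * π), sqrt_mul (sq_nonneg h), sqrt_sq hh.le]
  rw [hpdf, Real.enorm_of_nonneg (gaussianPDFReal_nonneg _ _ _), gaussianPDF]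

theorem lintegral_exp_mul_abs_mul_enorm_gaussDens_le {h : ℝ} (hh : 0 < h) (s : ℝ) :
    ∫⁻ t, ENNReal.ofReal (exp (s * |t|)) * ‖gaussDens h t‖ₑ
      ≤ ENNReal.ofReal (2 * exp (h ^ 2 * s ^ 2 / 2)) := by
  set v : NNReal := (h ^ 2).toNNReal
  have hv : v ≠ 0 := by
    rw [ne_eq, Real.toNNReal_eq_zero, not_le]
    positivity
  calc ∫⁻ t, ENNReal.ofReal (exp (s * |t|)) * ‖gaussDens h t‖ₑ
      = ∫⁻ t, ENNReal.ofReal (exp (s * |t|)) ∂gaussianReal 0 v := by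
        rw [gaussianReal_of_var_ne_zero 0 hv, lintegral_withDensity_eq_lintegral_mul _
          (measurable_gaussianPDF 0 v) (by fun_prop)]
        exact lintegral_congr fun t => by rw [enorm_gaussDens hh, Pi.mul_apply, mul_comm]
    _ ≤ ENNReal.ofReal (mgf id (gaussianReal 0 v) s + mgf id (gaussianReal 0 v) (-s)) :=
        lintegral_exp_mul_abs_le_mgf _ (integrable_exp_mul_gaussianReal s)
          (integrable_exp_mul_gaussianReal (-s))
    _ = ENNReal.ofReal (2 * exp (h ^ 2 * s ^ 2 / 2)) := by
        rw [mgf_id_gaussianReal]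
        simp only [v, Real.coe_toNNReal _ (sq_nonneg h)]
        ring_nf

theorem lintegral_exp_mul_abs_mul_lintegral_gaussDens_le (μ : Measure ℝ) [SFinite μ] {s h : ℝ}
    (hs : 0 ≤ s) (hh : 0 < h) (hh1 : h ≤ 1) :
    ∫⁻ x, ENNReal.ofReal (exp (s * |x|)) * ∫⁻ y, ‖gaussDens h (x - y)‖ₑ ∂μ
      ≤ (∫⁻ y, ENNReal.ofReal (exp (s * |y|)) ∂μ) * ENNReal.ofReal (2 * exp (s ^ 2 / 2)) := by
  have hmeas : Measurable fun t => ‖gaussDens h t‖ₑ := by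
    unfold gaussDens
    fun_prop
  grw [lintegral_mul_lintegral_sub_le volume μ (by fun_prop) hmeas (ofReal_exp_mul_abs_add_le hs),
    lintegral_exp_mul_abs_mul_enorm_gaussDens_le hh s]
  gcongr
  exact mul_le_of_le_one_left (sq_nonneg s) (pow_le_one₀ hh.le hh1)

theorem tail_integral_bound_smoothed_mixing_general
    (G G' : Measure ℝ) [IsProbabilityMeasure G] [IsProbabilityMeasure G']
    (s₀ : ℝ)
    (hmgfG : ∀ s : ℝ, |s| < s₀ → Integrable (fun y => Real.exp (s * y)) G)
    (hmgfG' : ∀ s : ℝ, |s| < s₀ → Integrable (fun y => Real.exp (s * y)) G')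
    (p : ℝ) (hp : 1 ≤ p) (u : ℝ) (hu : 0 < u) (hus₀ : u < s₀) :
    ∃ C : ℝ, ∀ M : ℝ, 0 < M → ∀ h : ℝ, 0 < h → h ≤ 1 →
      ∫ x in {x : ℝ | M < |x|},
          |x| ^ p * ((∫ y, gaussDens h (x - y) ∂G) +
            ∫ y, gaussDens h (x - y) ∂G') ≤
        C * Real.exp (-u * M) := by
  obtain ⟨s, hus, hss⟩ := exists_between hus₀
  have hs : |s| < s₀ ∧ |-s| < s₀ := by
    rw [abs_neg, abs_of_pos (by linarith)]
    exact ⟨hss, hss⟩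
  set K := (p / (s - u)) ^ p
  have hK : 0 ≤ K := rpow_nonneg (div_nonneg (by linarith) (by linarith)) p
  have hmgf : ∀ t, |t| < s₀ → Integrable (fun y => exp (t * y)) (G + G') :=
    fun t ht => (hmgfG t ht).add_measure (hmgfG' t ht)
  set A := mgf id (G + G') s + mgf id (G + G') (-s)
  have hA : 0 ≤ A := add_nonneg mgf_nonneg mgf_nonneg
  refine ⟨K * A * (2 * exp (s ^ 2 / 2)), fun M hM h hh hh1 => ?_⟩
  refine integral_le_of_lintegral_enorm_le (by positivity) ?_
  calc _ ≤ ∫⁻ x in {x : ℝ | M < |x|}, ENNReal.ofReal (K * exp (-u * M)) *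
        (ENNReal.ofReal (exp (s * |x|)) * ∫⁻ y, ‖gaussDens h (x - y)‖ₑ ∂(G + G')) :=
        setLIntegral_mono' (measurableSet_lt measurable_const measurable_abs) fun x hx =>
          enorm_rpow_mul_integral_add_integral_le G G' _ (by linarith) hu.le hus hx.le
    _ ≤ ENNReal.ofReal (K * exp (-u * M)) * ((∫⁻ y, ENNReal.ofReal (exp (s * |y|)) ∂(G + G'))
        * ENNReal.ofReal (2 * exp (s ^ 2 / 2))) := by
        rw [lintegral_const_mul' _ _ ENNReal.ofReal_ne_top]
        grw [setLIntegral_le_lintegral, lintegral_exp_mul_abs_mul_lintegral_gaussDens_le _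
          (by linarith) hh hh1]
    _ ≤ ENNReal.ofReal (K * exp (-u * M)) *
        (ENNReal.ofReal A * ENNReal.ofReal (2 * exp (s ^ 2 / 2))) := by
        gcongr
        exact lintegral_exp_mul_abs_le_mgf _ (hmgf s hs.1) (hmgf (-s) hs.2)
    _ = ENNReal.ofReal (K * A * (2 * exp (s ^ 2 / 2)) * exp (-u * M)) := by
        rw [← ENNReal.ofReal_mul (by positivity), ← ENNReal.ofReal_mul (by positivity)]
        ring_nf

theorem tail_integral_bound_smoothed_mixing
    (G G' : Measure ℝ) [IsProbabilityMeasure G] [IsProbabilityMeasure G']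
    (s₀ : ℝ) (hs₀ : 0 < s₀) (hs₀1 : s₀ < 1)
    (hmgfG : ∀ s : ℝ, |s| < s₀ → Integrable (fun y => Real.exp (s * y)) G)
    (hmgfG' : ∀ s : ℝ, |s| < s₀ → Integrable (fun y => Real.exp (s * y)) G')
    (p : ℝ) (hp : 1 ≤ p) (u : ℝ) (hu : 0 < u) (hus₀ : u < s₀) :
    ∃ C : ℝ, ∀ M : ℝ, 0 < M → ∀ h : ℝ, 0 < h → h ≤ 1 →
      ∫ x in {x : ℝ | M < |x|},
          |x| ^ p * ((∫ y, gaussDens h (x - y) ∂G) +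
            ∫ y, gaussDens h (x - y) ∂G') ≤
        C * Real.exp (-u * M) :=
  tail_integral_bound_smoothed_mixing_general G G' s₀ hmgfG hmgfG' p hp u hu hus₀
end
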